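/- Let 3 ≤ k ≤ m with k = m or k odd, and let U ⊆ V be a complex subspace. If z(U) is contained in E_{n-k-3,k-3} and z(U) is isotropic with respect to β_C^{n-k-3,k-3}, then U is contained in E_{n-k-1,k-1} and U is isotropic with respect to β_C^{n-k-1,k-1}. -/

import Mathlib

noncomputable section
namespace Spr

/-! ### Linear algebra setup -/

abbrev Vsp (N : ℕ) := EuclideanSpace ℂ (Fin (2*N))
abbrev C2 := EuclideanSpace ℂ (Fin 2)

/-- The basis vector `e_i` (1-based index). -/
def eVec (N i : ℕ) : Vsp N :=
  if h : 1 ≤ i ∧ i ≤ N then EuclideanSpace.single (⟨i-1, by omega⟩ : Fin (2*N)) 1 else 0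

/-- The basis vector `f_i` (1-based index). -/
def fVec (N i : ℕ) : Vsp N :=
  if h : 1 ≤ i ∧ i ≤ N then EuclideanSpace.single (⟨N+i-1, by omega⟩ : Fin (2*N)) 1 else 0

/-- The standard basis vector `e` of `ℂ²`. -/
def eStd : C2 := EuclideanSpace.single 0 1
/-- The standard basis vector `f` of `ℂ²`. -/
def fStd : C2 := EuclideanSpace.single 1 1

/-- The nilpotent endomorphism `z` with two equal Jordan blocks:
`z e_1 = 0 = z f_1`, `z e_{i+1} = e_i`, `z f_{i+1} = f_i`. -/
def zMap (N : ℕ) : Vsp N →ₗ[ℂ] Vsp N where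
  toFun v := WithLp.toLp 2 (fun (j : Fin (2*N)) => if h : j.val + 1 < 2*N ∧ j.val + 1 ≠ N then v ⟨j.val+1, h.1⟩ else 0)
  map_add' v w := by
    ext j
    by_cases h : j.val + 1 < 2*N ∧ j.val + 1 ≠ N <;> simp [h, PiLp.add_apply]
  map_smul' c v := by
    ext j
    by_cases h : j.val + 1 < 2*N ∧ j.val + 1 ≠ N <;> simp [h, PiLp.smul_apply]

def cIdx (N : ℕ) (j : Fin 2) (i : Fin N) : Fin (2*N) :=
  ⟨if j.val = 0 then i.val else N + i.val, by have := i.isLt; split <;> omega⟩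

/-- The linear map `C : ℂ^{2N} → ℂ²`, `e_i ↦ e`, `f_i ↦ f`. -/
def Cmap (N : ℕ) : Vsp N →ₗ[ℂ] C2 where
  toFun v := WithLp.toLp 2 (fun j => ∑ i : Fin N, v (cIdx N j i))
  map_add' v w := by
    ext j
    simp [PiLp.add_apply, Finset.sum_add_distrib]
  map_smul' c v := by
    ext j
    simp [PiLp.smul_apply, Finset.mul_sum]

/-- The subspace `E_{a,b} = span(e_1,…,e_a,f_1,…,f_b)`. -/
def Esub (N a b : ℕ) : Submodule ℂ (Vsp N) :=
  Submodule.span ℂ ((eVec N '' Set.Icc 1 a) ∪ (fVec N '' Set.Icc 1 b))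

/-- Gram coefficients of the symmetric bilinear form `β_D^{2m-k,k}`. -/
def cD (N m k : ℕ) (p q : Fin (2*N)) : ℂ :=
  if k = m then
    (if p.val < N ∧ N ≤ q.val then
      (if (p.val + 1) + (q.val - N + 1) = k + 1 then (-1:ℂ)^(q.val - N) else 0)
    else if N ≤ p.val ∧ q.val < N then
      (if (p.val - N + 1) + (q.val + 1) = k + 1 then (-1:ℂ)^(p.val - N) else 0)
    else 0)
  else
    (if p.val < N ∧ q.val < N then
      (if (p.val + 1) + (q.val + 1) = 2*m - k + 1 then (-1:ℂ)^(p.val) else 0)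
    else if N ≤ p.val ∧ N ≤ q.val then
      (if (p.val - N + 1) + (q.val - N + 1) = k + 1 then (-1:ℂ)^(p.val - N + 1) else 0)
    else 0)

/-- Gram coefficients of the symplectic bilinear form `β_C^{2m-k-1,k-1}`. -/
def cC (N m k : ℕ) (p q : Fin (2*N)) : ℂ :=
  if k = m then
    (if N ≤ p.val ∧ q.val < N then
      (if (p.val - N + 1) + (q.val + 1) = k then (-1:ℂ)^(p.val - N) else 0)
    else if p.val < N ∧ N ≤ q.val then
      (if (p.val + 1) + (q.val - N + 1) = k then -(-1:ℂ)^(q.val - N) else 0)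
    else 0)
  else
    (if p.val < N ∧ q.val < N then
      (if (p.val + 1) + (q.val + 1) = 2*m - k ∧ p.val < q.val then (-1:ℂ)^(p.val + 1)
       else if (p.val + 1) + (q.val + 1) = 2*m - k ∧ q.val < p.val then (-1:ℂ)^(p.val)
       else 0)
    else if N ≤ p.val ∧ N ≤ q.val then
      (if (p.val - N + 1) + (q.val - N + 1) = k ∧ p.val < q.val then (-1:ℂ)^(p.val - N)
       else if (p.val - N + 1) + (q.val - N + 1) = k ∧ q.val < p.val then (-1:ℂ)^(p.val - N + 1)
       else 0)
    else 0)

/-- The bilinear pairing associated to a matrix `c` of coefficients. -/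
def bFormFun (N : ℕ) (c : Fin (2*N) → Fin (2*N) → ℂ) (v w : Vsp N) : ℂ :=
  ∑ p : Fin (2*N), ∑ q : Fin (2*N), v p * (c p q * w q)

/-- The symmetric bilinear form `β_D^{2m-k,k}` (extended by zero to all of `ℂ^{2N}`). -/
def betaD (N m k : ℕ) : Vsp N → Vsp N → ℂ := bFormFun N (cD N m k)

/-- The symplectic bilinear form `β_C^{2m-k-1,k-1}` (extended by zero to all of `ℂ^{2N}`). -/
def betaC (N m k : ℕ) : Vsp N → Vsp N → ℂ := bFormFun N (cC N m k)

/-- A subspace is isotropic with respect to a bilinear form. -/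
def IsIsotropic {N : ℕ} (B : Vsp N → Vsp N → ℂ) (W : Submodule ℂ (Vsp N)) : Prop :=
  ∀ v ∈ W, ∀ w ∈ W, B v w = 0

lemma bFormFun_add_left {N : ℕ} (c : Fin (2*N) → Fin (2*N) → ℂ) (v v' w : Vsp N) :
    bFormFun N c (v + v') w = bFormFun N c v w + bFormFun N c v' w := by
  simp [bFormFun, PiLp.add_apply, add_mul, Finset.sum_add_distrib]

lemma bFormFun_smul_left {N : ℕ} (c : Fin (2*N) → Fin (2*N) → ℂ) (s : ℂ) (v w : Vsp N) :
    bFormFun N c (s • v) w = s * bFormFun N c v w := by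
  simp [bFormFun, PiLp.smul_apply, smul_eq_mul, mul_assoc, Finset.mul_sum]

lemma bFormFun_zero_left {N : ℕ} (c : Fin (2*N) → Fin (2*N) → ℂ) (w : Vsp N) :
    bFormFun N c 0 w = 0 := by
  simp [bFormFun]

/-- `{v ∈ E | ∀ w ∈ F, B(v,w) = 0}` for the bilinear form with coefficients `c`. -/
def perpB (N : ℕ) (c : Fin (2*N) → Fin (2*N) → ℂ) (E F : Submodule ℂ (Vsp N)) :
    Submodule ℂ (Vsp N) where
  carrier := {v | v ∈ E ∧ ∀ w ∈ F, bFormFun N c v w = 0}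
  add_mem' := by
    rintro x y ⟨hxE, hx⟩ ⟨hyE, hy⟩
    exact ⟨E.add_mem hxE hyE, fun w hw => by
      rw [bFormFun_add_left, hx w hw, hy w hw, add_zero]⟩
  zero_mem' := ⟨E.zero_mem, fun w hw => bFormFun_zero_left c w⟩
  smul_mem' := by
    rintro s x ⟨hxE, hx⟩
    exact ⟨E.smul_mem s hxE, fun w hw => by
      rw [bFormFun_smul_left, hx w hw, mul_zero]⟩

/-- `F^{⊥_D}`, the orthogonal of `F` inside `E_{2m-k,k}` with respect to `β_D`. -/
def perpD (N m k : ℕ) (F : Submodule ℂ (Vsp N)) : Submodule ℂ (Vsp N) :=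
  perpB N (cD N m k) (Esub N (2*m-k) k) F

/-- `F^{⊥_C}`, the orthogonal of `F` inside `E_{2m-k-1,k-1}` with respect to `β_C`. -/
def perpC (N m k : ℕ) (F : Submodule ℂ (Vsp N)) : Submodule ℂ (Vsp N) :=
  perpB N (cC N m k) (Esub N (2*m-k-1) (k-1)) F

/-- Membership in the Cautis–Kamnitzer variety `Y`: a flag `F_0 ⊆ F_1 ⊆ … ⊆ F_{len-1}` with
`F_0 = 0`, `dim F_i = i`, and `z F_i ⊆ F_{i-1}`. -/
def InY (N len : ℕ) (F : Fin len → Submodule ℂ (Vsp N)) : Prop :=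
  (∀ i : Fin len, i.val = 0 → F i = ⊥) ∧
  ∀ i j : Fin len, j.val = i.val + 1 →
    Module.finrank ℂ ↥(F j) = j.val ∧ F i ≤ F j ∧
      Submodule.map (zMap N) (F j) ≤ F i

/-- Membership in the embedded type `D` Springer fiber `Fl^{2m-k,k}_D ⊆ Y_m`. -/
def InFlD (N m k : ℕ) (F : Fin (m+1) → Submodule ℂ (Vsp N)) : Prop :=
  InY N (m+1) F ∧ F (Fin.last m) ≤ Esub N (2*m-k) k ∧
    IsIsotropic (betaD N m k) (F (Fin.last m))

/-- Membership in the embedded type `C` Springer fiber `Fl^{2m-k-1,k-1}_C ⊆ Y_{m-1}`;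
here `G : Fin m → _` is the flag `(G_0,…,G_{m-1})`. -/
def InFlC (N m k : ℕ) (G : Fin m → Submodule ℂ (Vsp N)) : Prop :=
  InY N m G ∧ ∀ i : Fin m, i.val = m - 1 →
    G i ≤ Esub N (2*m-k-1) (k-1) ∧ IsIsotropic (betaC N m k) (G i)

/-! ### Cup diagrams -/

/-- A (dotted) cup diagram on the vertices `{1,…,m}`. -/
structure CupDiagram (m : ℕ) where
  cups : Finset (ℕ × ℕ)
  dottedCups : Finset (ℕ × ℕ)
  dottedRays : Finset ℕ
  cups_valid : ∀ p ∈ cups, 1 ≤ p.1 ∧ p.1 < p.2 ∧ p.2 ≤ m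
  cups_disjoint : ∀ p ∈ cups, ∀ q ∈ cups, p ≠ q →
    p.1 ≠ q.1 ∧ p.1 ≠ q.2 ∧ p.2 ≠ q.1 ∧ p.2 ≠ q.2
  noncrossing : ∀ p ∈ cups, ∀ l, p.1 < l → l < p.2 →
    ∃ q ∈ cups, (l = q.1 ∨ l = q.2) ∧ p.1 < q.1 ∧ q.2 < p.2
  dottedCups_sub : dottedCups ⊆ cups
  dottedRays_valid : ∀ r ∈ dottedRays, 1 ≤ r ∧ r ≤ m ∧ ∀ p ∈ cups, r ≠ p.1 ∧ r ≠ p.2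
  dottedCups_cond : ∀ p ∈ dottedCups,
    (∀ q ∈ cups, ¬(q.1 < p.1 ∧ p.2 < q.2)) ∧
    (∀ r, p.2 < r → r ≤ m → ∃ q ∈ cups, r = q.1 ∨ r = q.2)
  dottedRays_cond : ∀ r ∈ dottedRays, ∀ r', r < r' → r' ≤ m →
    ∃ q ∈ cups, r' = q.1 ∨ r' = q.2

/-- The vertex `v` carries a ray of the cup diagram `a`. -/
def CupDiagram.HasRay {m : ℕ} (a : CupDiagram m) (v : ℕ) : Prop :=
  1 ≤ v ∧ v ≤ m ∧ ∀ p ∈ a.cups, v ≠ p.1 ∧ v ≠ p.2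

/-- The total number of dots of a cup diagram. -/
def CupDiagram.dots {m : ℕ} (a : CupDiagram m) : ℕ :=
  a.dottedCups.card + a.dottedRays.card

/-! ### The sets `T_a ⊆ (ℙ¹)^m` -/

/-- The subset `T_a ⊆ (ℙ¹)^m` attached to a cup diagram `a ∈ B^{2m-k,k}`
(tuples are `0`-indexed: the coordinate `l i` corresponds to the vertex `i+1`). -/
def Ta (m k : ℕ) (a : CupDiagram m) : Set (Fin m → Submodule ℂ C2) :=
  {l | (∀ i : Fin m, Module.finrank ℂ ↥(l i) = 1) ∧
       (∀ i j : Fin m, (i.val+1, j.val+1) ∈ a.cups → (i.val+1, j.val+1) ∉ a.dottedCups →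
          l j = (l i)ᗮ) ∧
       (∀ i j : Fin m, (i.val+1, j.val+1) ∈ a.dottedCups → l i = l j) ∧
       (if k = m then
          ∀ i : Fin m, a.HasRay (i.val+1) →
            (i.val+1 ∉ a.dottedRays → l i = Submodule.span ℂ {fStd}) ∧
            (i.val+1 ∈ a.dottedRays → l i = Submodule.span ℂ {eStd})
        else
          ∀ i : Fin m, a.HasRay (i.val+1) →
            ((∃ r, a.HasRay r ∧ i.val+1 < r) → l i = Submodule.span ℂ {eStd}) ∧
            ((∀ r, a.HasRay r → r ≤ i.val+1) →
              l i = Submodule.span ℂ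
                {(if (m-k) % 2 = 0 then (1:ℂ) else Complex.I) • eStd +
                 (if i.val+1 ∈ a.dottedRays then (1:ℂ) else (-1:ℂ)) • fStd}))}

/-- The compatibility `C(F_{i} ∩ F_{i-1}^⊥) = l_i` for all `1 ≤ i ≤ m`. -/
def Compat (N m : ℕ) (F : Fin (m+1) → Submodule ℂ (Vsp N))
    (l : Fin m → Submodule ℂ C2) : Prop :=
  ∀ i : Fin m, Submodule.map (Cmap N) (F i.succ ⊓ (F i.castSucc)ᗮ) = l i

/-! ### Spheres and the topological Springer fiber -/

abbrev E3 := EuclideanSpace ℝ (Fin 3)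
abbrev Sph : Type := ↥(Metric.sphere (0 : E3) 1)

/-- The point `p = (0,0,1)`. -/
def pPt : E3 := EuclideanSpace.single 2 1
/-- The point `q = (1,0,0)`. -/
def qPt : E3 := EuclideanSpace.single 0 1

/-- The submanifold `S_a ⊆ (S²)^m` attached to a cup diagram `a`
(tuples are `0`-indexed: the coordinate `x i` corresponds to the vertex `i+1`). -/
def Sa (m : ℕ) (a : CupDiagram m) : Set (Fin m → Sph) :=
  {x | (∀ i j : Fin m, (i.val+1, j.val+1) ∈ a.cups →
          ((i.val+1, j.val+1) ∉ a.dottedCups → (x i : E3) = -(x j : E3)) ∧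
          ((i.val+1, j.val+1) ∈ a.dottedCups → (x i : E3) = (x j : E3))) ∧
       (∀ i : Fin m, a.HasRay (i.val+1) →
          (i.val+1 ∈ a.dottedRays → (x i : E3) = pPt) ∧
          (i.val+1 ∉ a.dottedRays →
            ((∀ r, a.HasRay r → r ≤ i.val+1) → (x i : E3) = -pPt) ∧
            ((∃ r, a.HasRay r ∧ i.val+1 < r) → (x i : E3) = qPt)))}

/-! ### Circle diagrams -/

/-- The edge relation of the circle diagram `\bar a b`. -/
def EdgeRel (m : ℕ) (a b : CupDiagram m) (i j : ℕ) : Prop :=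
  (i, j) ∈ a.cups ∨ (j, i) ∈ a.cups ∨ (i, j) ∈ b.cups ∨ (j, i) ∈ b.cups

/-- Two vertices lie in the same connected component of the circle diagram. -/
def Reach (m : ℕ) (a b : CupDiagram m) : ℕ → ℕ → Prop :=
  Relation.ReflTransGen (EdgeRel m a b)

/-- The number of dots on the connected component of the vertex `v` in the
circle diagram `\bar a b`. -/
def compDots (m : ℕ) (a b : CupDiagram m) (v : ℕ) : ℕ :=
  {p : ℕ × ℕ | p ∈ a.dottedCups ∧ Reach m a b v p.1 ∧ Reach m a b v p.2}.ncard +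
  {p : ℕ × ℕ | p ∈ b.dottedCups ∧ Reach m a b v p.1 ∧ Reach m a b v p.2}.ncard +
  {r : ℕ | r ∈ a.dottedRays ∧ Reach m a b v r}.ncard +
  {r : ℕ | r ∈ b.dottedRays ∧ Reach m a b v r}.ncard

/-- The connected component of `v` in the circle diagram is closed, i.e. none of
its vertices carries a ray of `a` or of `b`. -/
def IsClosedCompAt (m : ℕ) (a b : CupDiagram m) (v : ℕ) : Prop :=
  ∀ w, Reach m a b v w → ¬ a.HasRay w ∧ ¬ b.HasRay w

/-- The number of closed connected components of the circle diagram `\bar a b`. -/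
def numClosed (m : ℕ) (a b : CupDiagram m) : ℕ :=
  {s : Set ℕ | ∃ v, 1 ≤ v ∧ v ≤ m ∧ IsClosedCompAt m a b v ∧
      s = {w | Reach m a b v w}}.ncard

/-! ### The diffeomorphism `γ_{n-k,k}` -/

/-- Stereographic projection `S² \ {p} → ℂ`. -/
def sigmaProj (v : E3) : ℂ :=
  Complex.ofReal (v 0 / (1 - v 2)) + Complex.I * Complex.ofReal (v 1 / (1 - v 2))

open scoped Classical in
/-- The map `γ : S² → ℙ¹` (extended to the ambient space `ℝ³`). -/
def gammaAmb (v : E3) : Submodule ℂ C2 :=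
  if v = pPt then Submodule.span ℂ {eStd}
  else Submodule.span ℂ {sigmaProj v • eStd + fStd}

/-- The coordinate swap `s(x,y,z) = (x,z,y)`. -/
def sSwap (v : E3) : E3 := WithLp.toLp 2 (fun (j : Fin 3) => v (if j.val = 1 then (2 : Fin 3) else if j.val = 2 then 1 else 0))
/-- The coordinate swap `t(x,y,z) = (z,y,x)`. -/
def tSwap (v : E3) : E3 := WithLp.toLp 2 (fun (j : Fin 3) => v (if j.val = 0 then (2 : Fin 3) else if j.val = 2 then 0 else 1))

/-- The diffeomorphism `γ_{n-k,k} : (S²)^m → (ℙ¹)^m`. -/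
def gammaNK (m k : ℕ) (x : Fin m → Sph) : Fin m → Submodule ℂ C2 := fun i =>
  if k = m then gammaAmb (x i)
  else if (m - k) % 2 = 1 then gammaAmb (tSwap (x i))
  else gammaAmb (sSwap (x i))

/-! ### Jordan types and special simultaneous Jordan systems -/

/-- The nilpotent endomorphism induced by `z` on the subquotient `W/F` has Jordan type
`(a,b)`, encoded via the dimensions of the kernels of its powers:
`dim ker((z̄)^j) = min(j,a) + min(j,b)` for all `j`. -/
def HasJordanTypeOn (N : ℕ) (W F : Submodule ℂ (Vsp N)) (a b : ℕ) : Prop :=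
  ∀ j : ℕ, Module.finrank ℂ ↥(W ⊓ Submodule.comap (zMap N ^ j) F)
    = min j a + min j b + Module.finrank ℂ ↥F

/-- A special simultaneous Jordan system at level `i` for the subspace `Fi = F_i`
(Definition of Ehrig–Stroppel–Wilbert, Definition 4.4 of the paper). -/
def SpecialSJS (N m k : ℕ) (Fi : Submodule ℂ (Vsp N)) (i : ℕ) (ev fv : ℕ → Vsp N) : Prop :=
  (∀ j, 1 ≤ j → j + 1 ≤ m - i → zMap N (ev (j+1)) = ev j ∧ zMap N (fv (j+1)) = fv j) ∧
  (zMap N (ev 1) ∈ Fi ∧ zMap N (fv 1) ∈ Fi) ∧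
  (∀ j, 1 ≤ j → j ≤ m - i → ev j ∈ perpD N m k Fi ∧ fv j ∈ perpD N m k Fi) ∧
  (∀ j, 1 ≤ j → j ≤ m - i - 1 → ev j ∈ perpC N m k Fi ∧ fv j ∈ perpC N m k Fi) ∧
  LinearIndependent ℂ (fun s : Fin (m-i) ⊕ Fin (m-i) =>
    (Submodule.Quotient.mk (Sum.elim (fun t => ev (t.val+1)) (fun t => fv (t.val+1)) s) :
      Vsp N ⧸ Fi)) ∧
  (perpD N m k Fi
     = Fi ⊔ Submodule.span ℂ ((ev '' Set.Icc 1 (m-i)) ∪ (fv '' Set.Icc 1 (m-i)))) ∧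
  (perpC N m k Fi
     = Fi ⊔ Submodule.span ℂ ((ev '' Set.Icc 1 (m-i-1)) ∪ (fv '' Set.Icc 1 (m-i-1)))) ∧
  (∀ j j', 1 ≤ j → j ≤ m-i → 1 ≤ j' → j' ≤ m-i →
      betaD N m k (fv j) (ev j') = (if j + j' = m - i + 1 then (-1:ℂ)^(j-1) else 0) ∧
      betaD N m k (ev j) (ev j') = 0 ∧ betaD N m k (fv j) (fv j') = 0) ∧
  (∀ j j', 1 ≤ j → j ≤ m-i-1 → 1 ≤ j' → j' ≤ m-i-1 →
      betaC N m k (fv j) (ev j') = (if j + j' = m - i then (-1:ℂ)^(j-1) else 0) ∧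
      betaC N m k (ev j') (fv j) = -(if j + j' = m - i then (-1:ℂ)^(j-1) else 0) ∧
      betaC N m k (ev j) (ev j') = 0 ∧ betaC N m k (fv j) (fv j') = 0) ∧
  (∀ j j', 1 ≤ j → j ≤ m-i → 1 ≤ j' → j' ≤ m-i →
      (inner ℂ (ev j) (ev j') : ℂ) = (if j = j' then 1 else 0) ∧
      (inner ℂ (fv j) (fv j') : ℂ) = (if j = j' then 1 else 0) ∧
      (inner ℂ (ev j) (fv j') : ℂ) = 0) ∧
  (∀ j, 1 ≤ j → j ≤ m-i → ev j ∈ Fiᗮ ∧ fv j ∈ Fiᗮ) ∧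
  (∀ j, 2 ≤ j → j ≤ m-i → Cmap N (ev j) = Cmap N (zMap N (ev j)) ∧
      Cmap N (fv j) = Cmap N (zMap N (fv j)))

/-! In coordinates `z` shifts each Jordan block down by one, so `z v ∈ E_{a,b}` forces
`v ∈ E_{a+1,b+1}`; in particular `U ⊆ E_{n-k-2,k-2}`. On that subspace the Gram matrix of
`β_C^{n-k-1,k-1}`, shifted by one in both indices, is minus that of `β_C^{n-k-3,k-3}`, while the
rows and columns of `e_1` and `f_1` only pair with coordinates that vanish on `E_{n-k-2,k-2}`.
Hence `β_C^{n-k-1,k-1}(u,u') = -β_C^{n-k-3,k-3}(zu,zu')` on `U`, and isotropy of `zU` transfers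
to `U`. -/

lemma val_finRotate {n : ℕ} (i : Fin n) : (finRotate n i : ℕ) = (i + 1) % n := by
  cases n with
  | zero => exact i.elim0
  | succ n =>
    rw [coe_finRotate]
    split_ifs with h
    · simp [h]
    · rw [Nat.mod_eq_of_lt]
      exact Nat.succ_lt_succ (Fin.val_lt_last h)

lemma zMap_apply {N : ℕ} (v : Vsp N) (r : Fin (2*N)) :
    zMap N v r = if h : r.val + 1 < 2*N ∧ r.val + 1 ≠ N then v ⟨r.val + 1, h.1⟩ else 0 :=
  rfl

lemma zMap_apply_of_val_eq_succ {N : ℕ} (v : Vsp N) {r p : Fin (2*N)}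
    (hp : p.val = r.val + 1) (hpN : p.val ≠ N) : zMap N v r = v p := by
  rw [zMap_apply, dif_pos ⟨by omega, by omega⟩,
    show (⟨r.val + 1, _⟩ : Fin (2*N)) = p from Fin.ext hp.symm]

lemma zMap_apply_eq_zero {N : ℕ} (v : Vsp N) {r : Fin (2*N)}
    (hr : r.val + 1 = N ∨ r.val + 1 = 2*N) : zMap N v r = 0 := by
  rw [zMap_apply, dif_neg (by omega)]

-- Coordinate `p` is that of `e_{p+1}` for `p < N` and of `f_{p+1-N}` for `N ≤ p`.
lemma mem_Esub_iff {N a b : ℕ} {v : Vsp N} :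
    v ∈ Esub N a b ↔ ∀ p : Fin (2*N), (a ≤ p.val ∧ p.val < N ∨ N + b ≤ p.val) → v p = 0 := by
  classical
  constructor
  · intro hv
    induction hv using Submodule.span_induction with
    | mem x hx =>
      rcases hx with ⟨i, ⟨hi1, hi⟩, rfl⟩ | ⟨i, ⟨hi1, hi⟩, rfl⟩ <;> intro p hp
      · unfold eVec
        split_ifs
        · rw [PiLp.single_apply, if_neg (by simp only [Fin.ext_iff]; omega)]
        · rfl
      · unfold fVec
        split_ifs
        · rw [PiLp.single_apply, if_neg (by simp only [Fin.ext_iff]; omega)]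
        · rfl
    | zero => exact fun _ _ => rfl
    | add x y _ _ hx hy => exact fun p hp => by simp [hx p hp, hy p hp]
    | smul c x _ hx => exact fun p hp => by simp [hx p hp]
  · intro hv
    rw [← (EuclideanSpace.basisFun (Fin (2*N)) ℂ).sum_repr v]
    refine Submodule.sum_mem _ fun p _ => ?_
    rw [EuclideanSpace.basisFun_repr, EuclideanSpace.basisFun_apply]
    by_cases hp : a ≤ p.val ∧ p.val < N ∨ N + b ≤ p.val
    · rw [hv p hp, zero_smul]
      exact Submodule.zero_mem _
    refine Submodule.smul_mem _ _ (Submodule.subset_span ?_)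
    by_cases hpN : p.val < N
    · refine Or.inl ⟨p.val + 1, ⟨by omega, by omega⟩, ?_⟩
      rw [eVec, dif_pos ⟨by omega, by omega⟩]
      rfl
    · refine Or.inr ⟨p.val - N + 1, ⟨by omega, by omega⟩, ?_⟩
      rw [fVec, dif_pos ⟨by omega, by omega⟩]
      congr
      omega

lemma Esub_mono {N a a' b b' : ℕ} (ha : a ≤ a') (hb : b ≤ b') : Esub N a b ≤ Esub N a' b' :=
  Submodule.span_mono (Set.union_subset_union
    (Set.image_mono (Set.Icc_subset_Icc_right ha)) (Set.image_mono (Set.Icc_subset_Icc_right hb)))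

lemma mem_Esub_succ_of_zMap_mem {N a b : ℕ} {v : Vsp N} (hv : zMap N v ∈ Esub N a b) :
    v ∈ Esub N (a + 1) (b + 1) := by
  rw [mem_Esub_iff] at hv ⊢
  intro p hp
  have := p.isLt
  rw [← zMap_apply_of_val_eq_succ v (r := ⟨p.val - 1, by omega⟩) (by simp only; omega) (by omega)]
  exact hv _ (by simp only; omega)

lemma neg_one_pow_of_eq_succ {a b : ℕ} (h : a = b + 1) : (-1 : ℂ) ^ a = -(-1) ^ b := by
  rw [h, pow_succ, mul_neg_one]

lemma cC_eq_neg_cC_of_val_eq_succ {N m k : ℕ} (hk : 2 ≤ k) (hkm : k ≤ m) {p q r s : Fin (2*N)}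
    (hp : p.val = r.val + 1) (hq : q.val = s.val + 1) (hpN : p.val ≠ N) (hqN : q.val ≠ N) :
    cC N m k p q = -cC N (m-2) (k-2) r s := by
  have := p.isLt
  have := q.isLt
  simp only [cC]
  by_cases hkm' : k = m
  · rw [if_pos hkm', if_pos (show k - 2 = m - 2 by omega)]
    split_ifs <;>
      first
        | (exfalso; omega)
        | exact neg_zero.symm
        | exact neg_one_pow_of_eq_succ (by omega)
        | exact congrArg Neg.neg (neg_one_pow_of_eq_succ (by omega))
  · rw [if_neg hkm', if_neg (show ¬k - 2 = m - 2 by omega)]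
    split_ifs <;>
      first
        | (exfalso; omega)
        | exact neg_zero.symm
        | exact neg_one_pow_of_eq_succ (by omega)

lemma mul_cC_mul_eq_zero_of_boundary {N m k : ℕ} {u u' : Vsp N}
    (hu : u ∈ Esub N (2*m-k-2) (k-2)) (hu' : u' ∈ Esub N (2*m-k-2) (k-2)) (p q : Fin (2*N))
    (hpq : p.val = 0 ∨ p.val = N ∨ q.val = 0 ∨ q.val = N) :
    u p * (cC N m k p q * u' q) = 0 := by
  have := p.isLt
  have := q.isLt
  have hsplit : cC N m k p q = 0
      ∨ (2*m-k-2 ≤ p.val ∧ p.val < N ∨ N + (k-2) ≤ p.val)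
      ∨ (2*m-k-2 ≤ q.val ∧ q.val < N ∨ N + (k-2) ≤ q.val) := by
    simp only [cC]
    split_ifs <;> first | exact Or.inl rfl | (right; omega)
  rcases hsplit with h | h | h
  · rw [h, zero_mul, mul_zero]
  · rw [mem_Esub_iff.mp hu p h, zero_mul]
  · rw [mem_Esub_iff.mp hu' q h, mul_zero, mul_zero]

lemma val_finRotate_eq_succ_or_boundary {n : ℕ} (r : Fin n) :
    (finRotate n r).val = r.val + 1 ∨ r.val + 1 = n ∧ (finRotate n r).val = 0 := by
  rw [val_finRotate]
  rcases Nat.lt_or_ge (r.val + 1) n with h | h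
  · exact Or.inl (Nat.mod_eq_of_lt h)
  · have hrn : r.val + 1 = n := by omega
    exact Or.inr ⟨hrn, by rw [hrn, Nat.mod_self]⟩

lemma mul_cC_finRotate {N m k : ℕ} (hk : 2 ≤ k) (hkm : k ≤ m) {u u' : Vsp N}
    (hu : u ∈ Esub N (2*m-k-2) (k-2)) (hu' : u' ∈ Esub N (2*m-k-2) (k-2)) (r s : Fin (2*N)) :
    u (finRotate _ r) * (cC N m k (finRotate _ r) (finRotate _ s) * u' (finRotate _ s))
      = -(zMap N u r * (cC N (m-2) (k-2) r s * zMap N u' s)) := by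
  have hr := val_finRotate_eq_succ_or_boundary r
  have hs := val_finRotate_eq_succ_or_boundary s
  by_cases hrN : r.val + 1 = N ∨ r.val + 1 = 2*N
  · rw [zMap_apply_eq_zero u hrN, zero_mul, neg_zero]
    exact mul_cC_mul_eq_zero_of_boundary hu hu' _ _ (by omega)
  by_cases hsN : s.val + 1 = N ∨ s.val + 1 = 2*N
  · rw [zMap_apply_eq_zero u' hsN, mul_zero, mul_zero, neg_zero]
    exact mul_cC_mul_eq_zero_of_boundary hu hu' _ _ (by omega)
  have hr' : (finRotate _ r).val = r.val + 1 := by omega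
  have hs' : (finRotate _ s).val = s.val + 1 := by omega
  rw [zMap_apply_of_val_eq_succ u hr' (by omega), zMap_apply_of_val_eq_succ u' hs' (by omega),
    cC_eq_neg_cC_of_val_eq_succ hk hkm hr' hs' (by omega) (by omega)]
  ring

theorem betaC_eq_neg_betaC_zMap {N m k : ℕ} (hk : 2 ≤ k) (hkm : k ≤ m) {u u' : Vsp N}
    (hu : u ∈ Esub N (2*m-k-2) (k-2)) (hu' : u' ∈ Esub N (2*m-k-2) (k-2)) :
    betaC N m k u u' = -betaC N (m-2) (k-2) (zMap N u) (zMap N u') := by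
  simp only [betaC, bFormFun, ← Finset.sum_neg_distrib,
    ← mul_cC_finRotate hk hkm hu hu']
  rw [← Equiv.sum_comp (finRotate _)]
  exact Finset.sum_congr rfl fun r _ => (Equiv.sum_comp (finRotate _) _).symm

theorem statement12_general (m N k : ℕ)
    (hk1 : 3 ≤ k) (hk2 : k ≤ m)
    (U : Submodule ℂ (Vsp N))
    (h1 : Submodule.map (zMap N) U ≤ Esub N (2*m-k-3) (k-3))
    (h2 : IsIsotropic (betaC N (m-2) (k-2)) (Submodule.map (zMap N) U)) :
    U ≤ Esub N (2*m-k-1) (k-1) ∧ IsIsotropic (betaC N m k) U := by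
  have hU : U ≤ Esub N (2*m-k-2) (k-2) := fun u hu => by
    simpa only [show 2*m-k-3+1 = 2*m-k-2 by omega, show k-3+1 = k-2 by omega] using
      mem_Esub_succ_of_zMap_mem (h1 (Submodule.mem_map_of_mem hu))
  refine ⟨hU.trans (Esub_mono (by omega) (by omega)), fun u hu u' hu' => ?_⟩
  rw [betaC_eq_neg_betaC_zMap (by omega) hk2 (hU hu) (hU hu'),
    h2 _ (Submodule.mem_map_of_mem hu) _ (Submodule.mem_map_of_mem hu'), neg_zero]

/-- If `zU ⊆ E_{n-k-3,k-3}` is isotropic with respect to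
`β_C^{n-k-3,k-3}`, then `U ⊆ E_{n-k-1,k-1}` is isotropic with respect to
`β_C^{n-k-1,k-1}`. -/
theorem statement12 (m N k : ℕ) (hm : 3 ≤ m) (hN : m < N)
    (hk1 : 3 ≤ k) (hk2 : k ≤ m) (hkadm : k = m ∨ Odd k)
    (U : Submodule ℂ (Vsp N))
    (h1 : Submodule.map (zMap N) U ≤ Esub N (2*m-k-3) (k-3))
    (h2 : IsIsotropic (betaC N (m-2) (k-2)) (Submodule.map (zMap N) U)) :
    U ≤ Esub N (2*m-k-1) (k-1) ∧ IsIsotropic (betaC N m k) U :=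
  statement12_general m N k hk1 hk2 U h1 h2

end Spr
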